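/- For any 2m×2m skew-symmetric matrix B over a commutative ring containing 1/2, pf^(α)(B) = 2^{-m} ∑_{i_1,...,i_m ∈ {0,1}} (-1)^{i_1+...+i_m} det^(2α)( (B_{i_r, i_s+1}(r,s))_{1≤r,s≤m} ), where the second index is taken modulo 2. -/

import Mathlib

open Matrix
open scoped Classical

variable {R : Type*} [CommRing R] [Invertible (2 : R)]

/-- The `(i,j)` entry (indices in `ZMod 2`) of the `2 × 2` block `B(r,s)` of `B`. -/
def Bblk {m : ℕ} (B : Matrix (Fin (2 * m)) (Fin (2 * m)) R) (r s : Fin m)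
    (i j : ZMod 2) : R :=
  B ⟨2 * r.val + i.val, by have := r.isLt; have := ZMod.val_lt i; omega⟩
    ⟨2 * s.val + j.val, by have := s.isLt; have := ZMod.val_lt j; omega⟩

/-- `P(B)(τ)` for the cycle `τ = (k 0, …, k (r-1))`. -/
noncomputable def Pcyc {m r : ℕ} [NeZero r] (B : Matrix (Fin (2 * m)) (Fin (2 * m)) R)
    (k : Fin r → Fin m) : R :=
  ⅟(2 : R) * ∑ i : Fin r → ZMod 2,
    (∏ j, (-1 : R) ^ (i j).val) * ∏ j, Bblk B (k j) (k (j + 1)) (i j) (i (j + 1) + 1)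

/-- The set of minimal representatives of the cycles (orbits) of `σ`. -/
noncomputable def reps {m : ℕ} (σ : Equiv.Perm (Fin m)) : Finset (Fin m) :=
  Finset.univ.filter fun x => ∀ n : ℕ, x ≤ (σ ^ n) x

/-- The number of cycles (orbits, including fixed points) of `σ`. -/
noncomputable def nu {m : ℕ} (σ : Equiv.Perm (Fin m)) : ℕ := (reps σ).card

/-- The length of the cycle of `σ` through `x`. -/
noncomputable def cycLen {m : ℕ} (σ : Equiv.Perm (Fin m)) (x : Fin m) : ℕ :=
  orderOf (σ.cycleOf x)

/-- The α-pfaffian `pf^(α)(B) = ∑_σ α^{m-ν(σ)} ∏ⱼ P(B)(σ⁽ʲ⁾)`. -/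
noncomputable def apf {m : ℕ} (α : R) (B : Matrix (Fin (2 * m)) (Fin (2 * m)) R) : R :=
  ∑ σ : Equiv.Perm (Fin m), α ^ (m - nu σ) *
    ∏ x ∈ reps σ,
      haveI : NeZero (cycLen σ x) := ⟨(orderOf_pos _).ne'⟩
      Pcyc B (fun j : Fin (cycLen σ x) => (σ ^ (j : ℕ)) x)

/-- The α-determinant `det^(α)(A) = ∑_σ α^{m-ν(σ)} ∏ᵢ a_{i σ(i)}`. -/
noncomputable def adet {m : ℕ} (α : R) (A : Matrix (Fin m) (Fin m) R) : R :=
  ∑ σ : Equiv.Perm (Fin m), α ^ (m - nu σ) * ∏ i, A i (σ i)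

/-! Expanding each cycle factor `P(B)(σ⁽ʲ⁾)` as a sum over `ZMod 2`-labellings of that cycle,
the product over the cycles of `σ` becomes one sum over labellings `i : Fin m → ZMod 2` of
`∏ᵣ (-1)^{i r} B_{i r, i (σ r) + 1}(r, σ r)`, because a labelling of `Fin m` is the same as a
family of labellings of the cycles. The `ν(σ)` factors `⅟2` are then absorbed by
`⅟2^m (2α)^{m-ν(σ)} = α^{m-ν(σ)} ⅟2^{ν(σ)}`, and exchanging the sums over `σ` and `i`
gives the right-hand side. -/

namespace Equiv.Perm

variable {m : ℕ} (σ : Perm (Fin m))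

instance (x : Fin m) : NeZero (cycLen σ x) := ⟨(orderOf_pos _).ne'⟩

lemma pow_apply_eq_self_iff_cycLen_dvd (x : Fin m) (n : ℕ) :
    (σ ^ n) x = x ↔ cycLen σ x ∣ n := by
  rw [cycLen, orderOf_dvd_iff_pow_eq_one, ← cycleOf_pow_apply_self]
  by_cases hx : σ x = x
  · simp [(cycleOf_eq_one_iff σ).2 hx]
  · exact ((isCycle_cycleOf σ hx).pow_eq_one_iff' (by rwa [cycleOf_apply_self])).symm

lemma pow_apply_eq_pow_apply_iff_modEq (x : Fin m) {j k : ℕ} (hjk : j ≤ k) :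
    (σ ^ j) x = (σ ^ k) x ↔ j ≡ k [MOD cycLen σ x] := by
  have hk : σ ^ k = σ ^ j * σ ^ (k - j) := by rw [← pow_add, Nat.add_sub_cancel' hjk]
  rw [Nat.modEq_iff_dvd' hjk, ← pow_apply_eq_self_iff_cycLen_dvd, hk, mul_apply, eq_comm,
    (σ ^ j).apply_eq_iff_eq]

lemma pow_mod_cycLen_apply (x : Fin m) (n : ℕ) : (σ ^ (n % cycLen σ x)) x = (σ ^ n) x := by
  simpa [cycLen] using pow_mod_orderOf_cycleOf_apply σ n x

lemma pow_val_add_one_apply (x : Fin m) (j : Fin (cycLen σ x)) :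
    (σ ^ ((j + 1 : Fin (cycLen σ x)) : ℕ)) x = σ ((σ ^ (j : ℕ)) x) := by
  rw [Fin.val_add, Fin.val_one', Nat.add_mod_mod, pow_mod_cycLen_apply, pow_succ', mul_apply]

lemma injective_pow_apply (x : Fin m) :
    Function.Injective fun j : Fin (cycLen σ x) => (σ ^ (j : ℕ)) x := by
  intro j k h
  wlog hjk : j ≤ k generalizing j k
  · exact (this h.symm (not_le.1 hjk).le).symm
  exact Fin.ext (((pow_apply_eq_pow_apply_iff_modEq σ x hjk).1 h).eq_of_lt_of_lt j.2 k.2)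

lemma eq_of_mem_reps_of_sameCycle {x y : Fin m} (hx : x ∈ reps σ) (hy : y ∈ reps σ)
    (h : σ.SameCycle x y) : x = y := by
  simp only [reps, Finset.mem_filter, Finset.mem_univ, true_and] at hx hy
  obtain ⟨a, -, ha⟩ := h.exists_pow_eq'
  obtain ⟨b, -, hb⟩ := h.symm.exists_pow_eq'
  exact le_antisymm ((hx a).trans_eq ha) ((hy b).trans_eq hb)

lemma exists_mem_reps_sameCycle (y : Fin m) : ∃ x ∈ reps σ, σ.SameCycle x y := by
  obtain ⟨x, hx, hmin⟩ := (Finset.univ.filter (σ.SameCycle y)).exists_min_image id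
    ⟨y, Finset.mem_filter.2 ⟨Finset.mem_univ _, SameCycle.refl σ y⟩⟩
  simp only [Finset.mem_filter, Finset.mem_univ, true_and, id] at hx hmin
  refine ⟨x, ?_, hx.symm⟩
  simp only [reps, Finset.mem_filter, Finset.mem_univ, true_and]
  exact fun n => hmin _ (sameCycle_pow_right.2 hx)

noncomputable def cycleSigmaEquiv : (Σ x : reps σ, Fin (cycLen σ x)) ≃ Fin m :=
  Equiv.ofBijective (fun p => (σ ^ (p.2 : ℕ)) p.1) <| by
    constructor
    · rintro ⟨⟨x, hx⟩, j⟩ ⟨⟨y, hy⟩, k⟩ h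
      have hxy : σ.SameCycle x y := by
        have h' : (σ ^ (j : ℕ)) x = (σ ^ (k : ℕ)) y := h
        rw [← sameCycle_pow_left (n := j), ← sameCycle_pow_right (n := k), h']
      obtain rfl := eq_of_mem_reps_of_sameCycle σ hx hy hxy
      exact Sigma.ext rfl (heq_of_eq (injective_pow_apply σ x h))
    · intro y
      obtain ⟨x, hx, hxy⟩ := exists_mem_reps_sameCycle σ y
      obtain ⟨n, -, rfl⟩ := hxy.exists_pow_eq'
      exact ⟨⟨⟨x, hx⟩, ⟨n % cycLen σ x, Nat.mod_lt _ (NeZero.pos _)⟩⟩,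
        pow_mod_cycLen_apply σ x n⟩

lemma prod_reps_sum_prod_eq_sum_prod {M κ : Type*} [CommSemiring M] [Fintype κ]
    (F : Fin m → κ → κ → M) :
    ∏ x ∈ reps σ, ∑ i : Fin (cycLen σ x) → κ,
        ∏ j : Fin (cycLen σ x), F ((σ ^ (j : ℕ)) x) (i j) (i (j + 1)) =
      ∑ i : Fin m → κ, ∏ r, F r (i r) (i (σ r)) := by
  set e := cycleSigmaEquiv σ
  have he (p : Σ x : reps σ, Fin (cycLen σ x)) : σ (e p) = e ⟨p.1, p.2 + 1⟩ :=
    (pow_val_add_one_apply σ p.1 p.2).symm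
  symm
  calc ∑ i : Fin m → κ, ∏ r, F r (i r) (i (σ r))
      = ∑ g : (Σ x : reps σ, Fin (cycLen σ x)) → κ,
          ∏ p, F (e p) (g p) (g ⟨p.1, p.2 + 1⟩) := by
        refine Fintype.sum_equiv (e.arrowCongr (Equiv.refl κ)).symm _ _ fun i => ?_
        rw [← e.prod_comp]
        simp [he]
    _ = ∑ g : ∀ x : reps σ, Fin (cycLen σ x) → κ,
          ∏ x : reps σ, ∏ j : Fin (cycLen σ x),
            F ((σ ^ (j : ℕ)) x) (g x j) (g x (j + 1)) :=
        Fintype.sum_equiv (Equiv.piCurry fun _ _ => κ) _ _ fun g => Fintype.prod_sigma _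
    _ = ∏ x : reps σ, ∑ i : Fin (cycLen σ x) → κ,
          ∏ j : Fin (cycLen σ x), F ((σ ^ (j : ℕ)) x) (i j) (i (j + 1)) :=
        (Fintype.prod_sum fun (x : reps σ) (i : Fin (cycLen σ x) → κ) =>
          ∏ j : Fin (cycLen σ x), F ((σ ^ (j : ℕ)) x) (i j) (i (j + 1))).symm
    _ = _ := Finset.prod_coe_sort (reps σ) fun x => ∑ i : Fin (cycLen σ x) → κ,
          ∏ j : Fin (cycLen σ x), F ((σ ^ (j : ℕ)) x) (i j) (i (j + 1))

lemma nu_le : nu σ ≤ m :=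
  (reps σ).card_le_univ.trans_eq (Fintype.card_fin m)

end Equiv.Perm

lemma invOf_pow_mul_mul_pow_sub {S : Type*} [CommSemiring S] (c a : S) [Invertible c]
    {k n : ℕ} (hk : k ≤ n) : ⅟c ^ n * (c * a) ^ (n - k) = a ^ (n - k) * ⅟c ^ k := by
  obtain ⟨d, rfl⟩ := Nat.exists_eq_add_of_le hk
  rw [Nat.add_sub_cancel_left, pow_add, mul_pow]
  calc ⅟c ^ k * ⅟c ^ d * (c ^ d * a ^ d) = a ^ d * ⅟c ^ k * (⅟c * c) ^ d := by ring
    _ = a ^ d * ⅟c ^ k := by rw [invOf_mul_self, one_pow, mul_one]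

open Equiv.Perm in
lemma prod_reps_Pcyc_eq {m : ℕ} (σ : Equiv.Perm (Fin m))
    (B : Matrix (Fin (2 * m)) (Fin (2 * m)) R) :
    ∏ x ∈ reps σ, Pcyc B (fun j : Fin (cycLen σ x) => (σ ^ (j : ℕ)) x) =
      ⅟(2 : R) ^ nu σ * ∑ i : Fin m → ZMod 2,
        ∏ r, (-1 : R) ^ (i r).val * Bblk B r (σ r) (i r) (i (σ r) + 1) := by
  calc ∏ x ∈ reps σ, Pcyc B (fun j : Fin (cycLen σ x) => (σ ^ (j : ℕ)) x)
      = ∏ x ∈ reps σ, ⅟(2 : R) * ∑ i : Fin (cycLen σ x) → ZMod 2,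
          ∏ j : Fin (cycLen σ x), (-1 : R) ^ (i j).val *
            Bblk B ((σ ^ (j : ℕ)) x) (σ ((σ ^ (j : ℕ)) x)) (i j) (i (j + 1) + 1) :=
        Finset.prod_congr rfl fun x _ => by
          simp only [Pcyc, Finset.prod_mul_distrib, pow_val_add_one_apply]
    _ = _ := by
        rw [Finset.prod_mul_distrib, Finset.prod_const, prod_reps_sum_prod_eq_sum_prod σ
          fun r a b => (-1 : R) ^ a.val * Bblk B r (σ r) a (b + 1)]
        rfl

theorem apf_eq_sum_adet_two_alpha_general (m : ℕ) (α : R)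
    (B : Matrix (Fin (2 * m)) (Fin (2 * m)) R) :
    apf α B = (⅟(2 : R)) ^ m * ∑ i : Fin m → ZMod 2,
      (∏ r, (-1 : R) ^ (i r).val) *
        adet (2 * α) (Matrix.of fun r s : Fin m => Bblk B r s (i r) (i s + 1)) := by
  simp only [apf, adet, Matrix.of_apply, Finset.mul_sum]
  rw [Finset.sum_comm]
  refine Finset.sum_congr rfl fun σ _ => ?_
  rw [prod_reps_Pcyc_eq, ← mul_assoc, ← invOf_pow_mul_mul_pow_sub 2 α σ.nu_le, Finset.mul_sum]
  refine Finset.sum_congr rfl fun i _ => ?_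
  rw [Finset.prod_mul_distrib]
  ring

theorem apf_eq_sum_adet_two_alpha (m : ℕ) (α : R)
    (B : Matrix (Fin (2 * m)) (Fin (2 * m)) R) (hB : Bᵀ = -B) :
    apf α B = (⅟(2 : R)) ^ m * ∑ i : Fin m → ZMod 2,
      (∏ r, (-1 : R) ^ (i r).val) *
        adet (2 * α) (Matrix.of fun r s : Fin m => Bblk B r s (i r) (i s + 1)) :=
  apf_eq_sum_adet_two_alpha_general m α B
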